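/- For every integer n ≥ 1, the number of little Schröder paths of length 2n equals the sum over k ≥ 0 of (1/n)·C(n,k)·C(n,k+1)·2^k, where C denotes the binomial coefficient. -/

import Mathlib

/-- A step of a Schröder path: upstep, downstep, or a *double* horizontal step. -/
inductive SchStep : Type
  | up : SchStep
  | down : SchStep
  | horiz : SchStep
deriving DecidableEq

/-- The number of unit steps a step occupies: `horiz` is a double horizontal step. -/
def SchStep.len : SchStep → ℕ
  | .up => 1
  | .down => 1
  | .horiz => 2

/-- The change in height produced by a step. -/
def SchStep.rise : SchStep → ℤ
  | .up => 1
  | .down => -1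
  | .horiz => 0

/-- The length of a path (a double horizontal step counts 2). -/
def pathLen (p : List SchStep) : ℕ := (p.map SchStep.len).sum

/-- The final height of a path started at height 0. -/
def pathHeight (p : List SchStep) : ℤ := (p.map SchStep.rise).sum

/-- A big Schröder path: ends at height 0 and never goes below the x-axis. -/
def IsBigSchroeder (p : List SchStep) : Prop :=
  pathHeight p = 0 ∧ ∀ q : List SchStep, q <+: p → 0 ≤ pathHeight q

/-- A little Schröder path: a big Schröder path with no double horizontal step at
height 0. -/
def IsLittleSchroeder (p : List SchStep) : Prop :=
  IsBigSchroeder p ∧ ∀ q r : List SchStep, p = q ++ SchStep.horiz :: r → pathHeight q ≠ 0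

/-!
Cutting a path at its first return to the axis gives, for the generating functions `B` of big and
`L` of little Schröder paths, `B = 1 + x (B + B²)` and `L = 1 + x B L`, hence
`2 x L² = (1 + x) L - 1`. Differentiating turns this into a linear differential equation, so the
counts `c n` satisfy `(n + 4) c (n + 3) = (6 n + 15) c (n + 2) - (n + 1) c (n + 1)`. The Narayana
sums satisfy the same recurrence (Zeilberger's method, with the certificate `gosperCert`), and both
sequences start with `1, 3`.
-/

namespace List

variable {α : Type*}

theorem forall_prefix_cons_iff {P : List α → Prop} {a : α} {l : List α} :
    (∀ w, w <+: a :: l → P w) ↔ P [] ∧ ∀ w, w <+: l → P (a :: w) := by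
  refine ⟨fun h => ⟨h [] nil_prefix, fun w hw => h _ ((prefix_cons_inj a).2 hw)⟩, ?_⟩
  rintro ⟨hnil, hcons⟩ w hw
  rcases prefix_cons_iff.1 hw with rfl | ⟨t, rfl, ht⟩
  exacts [hnil, hcons t ht]

theorem forall_prefix_append_iff {P : List α → Prop} {l₁ l₂ : List α} :
    (∀ w, w <+: l₁ ++ l₂ → P w) ↔ (∀ w, w <+: l₁ → P w) ∧ ∀ w, w <+: l₂ → P (l₁ ++ w) := by
  refine ⟨fun h => ⟨fun w hw => h w (prefix_append_of_prefix hw),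
    fun w hw => h _ ((prefix_append_right_inj l₁).2 hw)⟩, ?_⟩
  rintro ⟨h₁, h₂⟩ w ⟨z, hz⟩
  rcases append_eq_append_iff.1 hz with ⟨a, rfl, -⟩ | ⟨c, rfl, rfl⟩
  exacts [h₁ w (prefix_append w a), h₂ c (prefix_append c z)]

theorem forall_cons_eq_append_cons_iff {P : List α → Prop} {a x : α} {l : List α} :
    (∀ u v, a :: l = u ++ x :: v → P u) ↔
      (a = x → P []) ∧ ∀ u v, l = u ++ x :: v → P (a :: u) := by
  refine ⟨fun h => ⟨fun hax => h [] l (by simp [hax]), fun u v huv => h _ v (by simp [huv])⟩, ?_⟩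
  rintro ⟨hnil, hcons⟩ u v huv
  rcases cons_eq_append_iff.1 huv with ⟨rfl, h⟩ | ⟨u', rfl, rfl⟩
  exacts [hnil (cons.inj h).1.symm, hcons u' v rfl]

theorem forall_append_eq_append_cons_iff {P : List α → Prop} {x : α} {l₁ l₂ : List α} :
    (∀ u v, l₁ ++ l₂ = u ++ x :: v → P u) ↔
      (∀ u v, l₁ = u ++ x :: v → P u) ∧ ∀ u v, l₂ = u ++ x :: v → P (l₁ ++ u) := by
  refine ⟨fun h => ⟨fun u v huv => h u (v ++ l₂) (by simp [huv]),
    fun u v huv => h _ v (by simp [huv])⟩, ?_⟩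
  rintro ⟨h₁, h₂⟩ u v huv
  rcases append_eq_append_iff.1 huv with ⟨a, rfl, h⟩ | ⟨_ | ⟨y, c⟩, rfl, h⟩
  · exact h₂ a v h
  · simpa using h₂ [] v h.symm
  · obtain ⟨rfl, rfl⟩ := cons.inj h
    exact h₁ u c rfl

end List

namespace SchStep

instance : Fintype SchStep := ⟨{up, down, horiz}, fun s => by cases s <;> simp⟩

@[simp] lemma rise_up : up.rise = 1 := rfl
@[simp] lemma rise_down : down.rise = -1 := rfl
@[simp] lemma rise_horiz : horiz.rise = 0 := rfl

@[simp] lemma len_up : up.len = 1 := rfl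
@[simp] lemma len_down : down.len = 1 := rfl
@[simp] lemma len_horiz : horiz.len = 2 := rfl

lemma one_le_len (s : SchStep) : 1 ≤ s.len := by cases s <;> decide

lemma even_len_sub_rise (s : SchStep) : Even ((s.len : ℤ) - s.rise) := by cases s <;> decide

end SchStep

open SchStep

@[simp] lemma pathHeight_nil : pathHeight [] = 0 := rfl

@[simp] lemma pathHeight_cons (s : SchStep) (p : List SchStep) :
    pathHeight (s :: p) = s.rise + pathHeight p := by simp [pathHeight]

@[simp] lemma pathHeight_append (p q : List SchStep) :
    pathHeight (p ++ q) = pathHeight p + pathHeight q := by simp [pathHeight]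

@[simp] lemma pathLen_nil : pathLen [] = 0 := rfl

@[simp] lemma pathLen_cons (s : SchStep) (p : List SchStep) :
    pathLen (s :: p) = s.len + pathLen p := by simp [pathLen]

@[simp] lemma pathLen_append (p q : List SchStep) :
    pathLen (p ++ q) = pathLen p + pathLen q := by simp [pathLen]

lemma length_le_pathLen (p : List SchStep) : p.length ≤ pathLen p := by
  induction p with
  | nil => rfl
  | cons s p ih => simp only [List.length_cons, pathLen_cons]; have := s.one_le_len; omega

lemma even_pathLen_sub_pathHeight (p : List SchStep) :
    Even ((pathLen p : ℤ) - pathHeight p) := by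
  induction p with
  | nil => simp
  | cons s p ih =>
    rw [show (pathLen (s :: p) : ℤ) - pathHeight (s :: p)
        = (s.len - s.rise) + (pathLen p - pathHeight p) by
      push_cast [pathLen_cons, pathHeight_cons]; ring]
    exact s.even_len_sub_rise.add ih

lemma isBigSchroeder_nil : IsBigSchroeder [] := ⟨rfl, by simp⟩

lemma IsBigSchroeder.even_pathLen {p : List SchStep} (hp : IsBigSchroeder p) :
    ∃ a, pathLen p = 2 * a := by
  obtain ⟨a, ha⟩ := even_pathLen_sub_pathHeight p
  exact ⟨a.toNat, by rw [hp.1] at ha; omega⟩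

lemma not_isBigSchroeder_down_cons (t : List SchStep) : ¬ IsBigSchroeder (down :: t) :=
  fun hp => by simpa using hp.2 [down] ⟨t, rfl⟩

lemma isBigSchroeder_horiz_cons_iff {t : List SchStep} :
    IsBigSchroeder (horiz :: t) ↔ IsBigSchroeder t := by
  simp [IsBigSchroeder, List.forall_prefix_cons_iff]

lemma isBigSchroeder_up_append_iff {q r : List SchStep} (hq : IsBigSchroeder q) :
    IsBigSchroeder (up :: (q ++ down :: r)) ↔ IsBigSchroeder r := by
  have hq' : ∀ w, w <+: q → 0 ≤ 1 + pathHeight w := fun w hw => by linarith [hq.2 w hw]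
  simpa [IsBigSchroeder, List.forall_prefix_cons_iff, List.forall_prefix_append_iff, hq.1]
    using fun _ _ => hq'

lemma exists_first_descent {k : ℤ} (hk : 0 ≤ k) {t : List SchStep} (ht : k + pathHeight t < 0) :
    ∃ q r, t = q ++ down :: r ∧ k + pathHeight q = 0 ∧ ∀ w, w <+: q → 0 ≤ k + pathHeight w := by
  induction t generalizing k with
  | nil => simp at ht; omega
  | cons s t ih =>
    by_cases hdown : s = down ∧ k = 0
    · obtain ⟨rfl, rfl⟩ := hdown
      exact ⟨[], t, rfl, rfl, by simp⟩
    have hk' : 0 ≤ k + s.rise := by cases s <;> simp at hdown ⊢ <;> omega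
    obtain ⟨q, r, rfl, hq, hpos⟩ := ih hk' (by simp at ht; linarith)
    refine ⟨s :: q, r, rfl, by simp; linarith, List.forall_prefix_cons_iff.2 ⟨by simp [hk], ?_⟩⟩
    intro w hw
    simpa [add_assoc] using hpos w hw

lemma IsBigSchroeder.exists_first_return {t : List SchStep} (hp : IsBigSchroeder (up :: t)) :
    ∃ q r, t = q ++ down :: r ∧ IsBigSchroeder q ∧ IsBigSchroeder r := by
  have ht : 0 + pathHeight t < 0 := by linarith [show 1 + pathHeight t = 0 by simpa using hp.1]
  obtain ⟨q, r, rfl, hq₀, hq⟩ := exists_first_descent le_rfl ht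
  have hq : IsBigSchroeder q := ⟨by simpa using hq₀, by simpa using hq⟩
  exact ⟨q, r, rfl, hq, (isBigSchroeder_up_append_iff hq).1 hp⟩

lemma IsBigSchroeder.append_down_inj {q q' r r' : List SchStep} (hq : IsBigSchroeder q)
    (hq' : IsBigSchroeder q') (h : q ++ down :: r = q' ++ down :: r') : q = q' ∧ r = r' := by
  -- if `q'` were shorter, `q' ++ [down]` would be a prefix of `q` ending below the axis
  have key : ∀ {q q' r r' : List SchStep}, IsBigSchroeder q → IsBigSchroeder q' →
      q ++ down :: r = q' ++ down :: r' → q.length ≤ q'.length := by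
    intro q q' r r' hq hq' h
    by_contra! hlt
    have hpre : q' ++ [down] <+: q :=
      List.prefix_of_prefix_length_le (l₃ := q ++ down :: r) ⟨r', by simp [h]⟩
        (List.prefix_append q _) (by simpa)
    simpa [hq'.1] using hq.2 _ hpre
  obtain ⟨rfl, hr⟩ := List.append_inj h (le_antisymm (key hq hq' h) (key hq' hq h.symm))
  exact ⟨rfl, (List.cons.inj hr).2⟩

lemma isLittleSchroeder_nil : IsLittleSchroeder [] := ⟨isBigSchroeder_nil, by simp⟩

lemma not_isLittleSchroeder_horiz_cons (t : List SchStep) : ¬ IsLittleSchroeder (horiz :: t) :=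
  fun hp => hp.2 [] t rfl rfl

lemma isLittleSchroeder_up_append_iff {q r : List SchStep} (hq : IsBigSchroeder q) :
    IsLittleSchroeder (up :: (q ++ down :: r)) ↔ IsLittleSchroeder r := by
  have hq' : ∀ u v, q = u ++ horiz :: v → 1 + pathHeight u ≠ 0 := by
    rintro u v rfl
    have := hq.2 u (List.prefix_append _ _)
    omega
  simpa [IsLittleSchroeder, isBigSchroeder_up_append_iff hq, List.forall_cons_eq_append_cons_iff,
    List.forall_append_eq_append_cons_iff, hq.1] using fun _ _ => hq'

open Finset

abbrev SchroederPaths (P : List SchStep → Prop) (n : ℕ) : Type :=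
  {p : List SchStep // P p ∧ pathLen p = 2 * n}

instance (P : List SchStep → Prop) (n : ℕ) : Finite (SchroederPaths P n) :=
  Set.Finite.to_subtype <| (List.finite_length_le SchStep (2 * n)).subset
    fun p hp => (length_le_pathLen p).trans_eq hp.2

lemma card_schroederPaths_zero {P : List SchStep → Prop} (hP : P []) :
    Nat.card (SchroederPaths P 0) = 1 := by
  have : Unique (SchroederPaths P 0) :=
    { default := ⟨[], hP, rfl⟩
      uniq := fun p => Subtype.ext <| List.eq_nil_of_length_eq_zero <| by
        have := length_le_pathLen p.1; have := p.2.2; omega }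
  exact Nat.card_unique

/-- The pieces `(q, r)` of a path `up :: (q ++ down :: r)` of semilength `n + 1`, graded by the
semilengths of `q` and `r`. -/
abbrev FirstReturnData (P : List SchStep → Prop) (n : ℕ) : Type :=
  Σ ij : antidiagonal n, SchroederPaths IsBigSchroeder ij.1.1 × SchroederPaths P ij.1.2

lemma card_firstReturnData (P : List SchStep → Prop) (n : ℕ) :
    Nat.card (FirstReturnData P n) = ∑ ij ∈ antidiagonal n,
      Nat.card (SchroederPaths IsBigSchroeder ij.1) * Nat.card (SchroederPaths P ij.2) := by
  simp_rw [Nat.card_sigma, Nat.card_prod]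
  exact sum_coe_sort (antidiagonal n) fun ij =>
    Nat.card (SchroederPaths IsBigSchroeder ij.1) * Nat.card (SchroederPaths P ij.2)

section FirstReturn

variable {P : List SchStep → Prop}
  (hP : ∀ {q r}, IsBigSchroeder q → (P (up :: (q ++ down :: r)) ↔ P r))

def firstReturnJoin (n : ℕ) : FirstReturnData P n → SchroederPaths P (n + 1) :=
  fun ⟨ij, q, r⟩ => ⟨up :: (q.1 ++ down :: r.1), (hP q.2.1).2 r.2.1, by
    have := mem_antidiagonal.1 ij.2
    simp [q.2.2, r.2.2]; omega⟩

lemma firstReturnJoin_injective (n : ℕ) : Function.Injective (firstReturnJoin hP n) := by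
  rintro ⟨⟨⟨a, b⟩, hab⟩, ⟨q, hq, hql⟩, ⟨r, hr, hrl⟩⟩
    ⟨⟨⟨a', b'⟩, hab'⟩, ⟨q', hq', hql'⟩, ⟨r', hr', hrl'⟩⟩ h
  obtain ⟨rfl, rfl⟩ := hq.append_down_inj hq' (List.cons.inj (congrArg Subtype.val h)).2
  dsimp only at hql hrl hql' hrl'
  obtain ⟨rfl, rfl⟩ : a = a' ∧ b = b' := by constructor <;> omega
  rfl

lemma exists_firstReturnJoin_eq (hP_big : ∀ {p}, P p → IsBigSchroeder p) {n : ℕ}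
    {t : List SchStep} (ht : P (up :: t)) (hl : pathLen (up :: t) = 2 * (n + 1)) :
    ∃ x, (firstReturnJoin hP n x).1 = up :: t := by
  obtain ⟨q, r, rfl, hq, -⟩ := (hP_big ht).exists_first_return
  obtain ⟨a, ha⟩ := hq.even_pathLen
  simp only [pathLen_cons, pathLen_append, ha, len_up, len_down] at hl
  exact ⟨⟨⟨(a, n - a), mem_antidiagonal.2 (by omega)⟩, ⟨q, hq, ha⟩,
    ⟨r, (hP hq).1 ht, by dsimp only; omega⟩⟩, rfl⟩

end FirstReturn

def horizCons (n : ℕ) : SchroederPaths IsBigSchroeder n → SchroederPaths IsBigSchroeder (n + 1) :=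
  fun p => ⟨horiz :: p.1, isBigSchroeder_horiz_cons_iff.2 p.2.1, by simp [p.2.2]; ring⟩

lemma bijective_bigPaths_succ (n : ℕ) :
    Function.Bijective
      (Sum.elim (horizCons n) (firstReturnJoin isBigSchroeder_up_append_iff n)) := by
  refine ⟨Function.Injective.sumElim ?_ (firstReturnJoin_injective _ n) ?_, ?_⟩
  · exact fun p p' h => Subtype.ext (List.cons.inj (congrArg Subtype.val h)).2
  · exact fun p x h => nomatch (List.cons.inj (congrArg Subtype.val h)).1
  · rintro ⟨_ | ⟨s, t⟩, hp, hl⟩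
    · simp at hl
    cases s
    · obtain ⟨x, hx⟩ := exists_firstReturnJoin_eq isBigSchroeder_up_append_iff id hp hl
      exact ⟨.inr x, Subtype.ext hx⟩
    · exact absurd hp (not_isBigSchroeder_down_cons t)
    · exact ⟨.inl ⟨t, isBigSchroeder_horiz_cons_iff.1 hp, by simp at hl; omega⟩, rfl⟩

lemma bijective_littlePaths_succ (n : ℕ) :
    Function.Bijective
      (firstReturnJoin (P := IsLittleSchroeder) isLittleSchroeder_up_append_iff n) := by
  refine ⟨firstReturnJoin_injective _ n, ?_⟩
  rintro ⟨_ | ⟨s, t⟩, hp, hl⟩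
  · simp at hl
  cases s
  · obtain ⟨x, hx⟩ := exists_firstReturnJoin_eq isLittleSchroeder_up_append_iff And.left hp hl
    exact ⟨x, Subtype.ext hx⟩
  · exact absurd hp.1 (not_isBigSchroeder_down_cons t)
  · exact absurd hp (not_isLittleSchroeder_horiz_cons t)

lemma card_bigPaths_succ (n : ℕ) :
    Nat.card (SchroederPaths IsBigSchroeder (n + 1)) = Nat.card (SchroederPaths IsBigSchroeder n) +
      ∑ ij ∈ antidiagonal n, Nat.card (SchroederPaths IsBigSchroeder ij.1) *
        Nat.card (SchroederPaths IsBigSchroeder ij.2) := by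
  rw [← Nat.card_congr (Equiv.ofBijective _ (bijective_bigPaths_succ n)), Nat.card_sum,
    card_firstReturnData]

lemma card_littlePaths_succ (n : ℕ) :
    Nat.card (SchroederPaths IsLittleSchroeder (n + 1)) = ∑ ij ∈ antidiagonal n,
      Nat.card (SchroederPaths IsBigSchroeder ij.1) *
        Nat.card (SchroederPaths IsLittleSchroeder ij.2) := by
  rw [← Nat.card_congr (Equiv.ofBijective _ (bijective_littlePaths_succ n)), card_firstReturnData]

lemma card_littlePaths_one : Nat.card (SchroederPaths IsLittleSchroeder 1) = 1 := by
  simp [card_littlePaths_succ, card_schroederPaths_zero isBigSchroeder_nil,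
    card_schroederPaths_zero isLittleSchroeder_nil]

lemma card_littlePaths_two : Nat.card (SchroederPaths IsLittleSchroeder 2) = 3 := by
  simp [card_littlePaths_succ, card_bigPaths_succ, Finset.Nat.antidiagonal_succ,
    card_schroederPaths_zero isBigSchroeder_nil, card_schroederPaths_zero isLittleSchroeder_nil]

section GeneratingFunctions

open PowerSeries

theorem quadratic_of_first_return {R : Type*} [CommRing R] [IsDomain R] {x b l : R}
    (hx : 1 - x * b ≠ 0) (hb : b = 1 + x * (b + b * b)) (hl : l = 1 + x * (b * l)) :
    2 * x * l ^ 2 = (1 + x) * l - 1 := by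
  have h : (2 * x * l ^ 2 - ((1 + x) * l - 1)) * (1 - x * b) ^ 2 = 0 := by
    linear_combination
      (4 * x + 2 * x * (l - 1 - x * (b * l)) - (1 + x) * (1 - x * b)) * hl - x * hb
  exact sub_eq_zero.1 ((mul_eq_zero.1 h).resolve_right (pow_ne_zero 2 hx))

theorem derivative_eq_of_quadratic {R : Type*} [CommRing R] {y : R⟦X⟧}
    (hy : 2 * X * y ^ 2 = (1 + X) * y - 1) :
    X * (1 - 6 * X + X ^ 2) * d⁄dX R y = (3 * X - 1) * y + (1 - X) := by
  have hy' := congrArg (d⁄dX R)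
    (show X * y ^ 2 + X * y ^ 2 = y + X * y - 1 by linear_combination hy)
  simp only [map_sub, map_add, Derivation.leibniz, Derivation.leibniz_pow, derivative_X,
    derivative_one, smul_eq_mul] at hy'
  linear_combination (X * (4 * X * y - 1 - X)) * hy' -
    (8 * X ^ 2 * d⁄dX R y + 4 * X * y - X + 1) * hy

theorem coeff_recurrence_of_quadratic {y : ℚ⟦X⟧} (hy : 2 * X * y ^ 2 = (1 + X) * y - 1)
    (m : ℕ) :
    (m + 4) * coeff (m + 3) y = (6 * m + 15) * coeff (m + 2) y - (m + 1) * coeff (m + 1) y := by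
  have h := congrArg (coeff (m + 3)) (derivative_eq_of_quadratic hy)
  rw [← map_ofNat (C (R := ℚ)) 6, ← map_ofNat (C (R := ℚ)) 3] at h
  simp only [mul_add, mul_sub, mul_one, add_mul, sub_mul, mul_assoc, map_add, map_sub,
    coeff_succ_X_mul, coeff_derivative, Nat.cast_add, Nat.cast_ofNat, coeff_C_mul, Nat.cast_one,
    coeff_X_pow_mul', le_add_iff_nonneg_left, zero_le, ↓reduceIte, add_tsub_cancel_right, one_mul,
    coeff_one, Nat.add_eq_zero_iff, OfNat.ofNat_ne_zero, and_false, coeff_X, Nat.reduceEqDiff,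
    sub_self, add_zero] at h
  linear_combination h

noncomputable def pathsGF (P : List SchStep → Prop) : ℚ⟦X⟧ :=
  mk fun n => (Nat.card (SchroederPaths P n) : ℚ)

lemma pathsGF_big : pathsGF IsBigSchroeder =
    1 + X * (pathsGF IsBigSchroeder + pathsGF IsBigSchroeder * pathsGF IsBigSchroeder) := by
  ext (_ | n)
  · simp [pathsGF, card_schroederPaths_zero isBigSchroeder_nil]
  · rw [map_add, coeff_succ_X_mul, map_add, coeff_mul]
    simp [pathsGF, card_bigPaths_succ]

lemma pathsGF_little : pathsGF IsLittleSchroeder =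
    1 + X * (pathsGF IsBigSchroeder * pathsGF IsLittleSchroeder) := by
  ext (_ | n)
  · simp [pathsGF, card_schroederPaths_zero isLittleSchroeder_nil]
  · rw [map_add, coeff_succ_X_mul, coeff_mul]
    simp [pathsGF, card_littlePaths_succ]

lemma pathsGF_little_quadratic :
    2 * X * pathsGF IsLittleSchroeder ^ 2 = (1 + X) * pathsGF IsLittleSchroeder - 1 := by
  refine quadratic_of_first_return (fun h => ?_) pathsGF_big pathsGF_little
  simpa [pathsGF, card_schroederPaths_zero isBigSchroeder_nil] using congrArg constantCoeff h

end GeneratingFunctions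

lemma cast_choose_succ_mul (n k : ℕ) :
    ((n + 1).choose k : ℚ) * (n + 1 - k) = (n + 1) * n.choose k := by
  rcases le_or_gt k (n + 1) with hk | hk
  · have h := congrArg (Nat.cast (R := ℚ)) (Nat.choose_mul_succ_eq n k)
    push_cast [Nat.cast_sub hk] at h
    linear_combination -h
  · simp [Nat.choose_eq_zero_of_lt hk, Nat.choose_eq_zero_of_lt (Nat.lt_of_succ_lt hk)]

lemma cast_choose_succ_right_mul (n k : ℕ) :
    (n.choose (k + 1) : ℚ) * (k + 1) = n.choose k * (n - k) := by
  rcases le_or_gt k n with hk | hk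
  · have h := congrArg (Nat.cast (R := ℚ)) (Nat.choose_succ_right_eq n k)
    push_cast [Nat.cast_sub hk] at h
    exact h
  · simp [Nat.choose_eq_zero_of_lt hk, Nat.choose_eq_zero_of_lt (Nat.lt_succ_of_lt hk)]

lemma cast_choose_eq_div (n k : ℕ) :
    (n.choose k : ℚ) = (n + 1 - k) * (n + 1).choose k / (n + 1) := by
  rw [eq_div_iff (by positivity)]
  linear_combination -cast_choose_succ_mul n k

/-- `N(m + 1, k) 2^k`, written without the factor `1 / (m + 1)`. -/
noncomputable def narayanaTerm (m k : ℕ) : ℚ := 2 ^ k * (m + 1).choose k * m.choose k / (k + 1)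

noncomputable def narayanaSum (m : ℕ) : ℚ := ∑ k ∈ range (m + 1), narayanaTerm m k

noncomputable def gosperCert (m k : ℕ) : ℚ :=
  2 ^ k * (3 * (m + 2).choose k * (m + 1).choose k - (m + 2).choose k ^ 2
    - (m + 2).choose k * (m + 3).choose k - (m + 1).choose k ^ 2)

lemma narayanaTerm_recurrence (m k : ℕ) :
    (m + 4) * narayanaTerm (m + 2) k - (6 * m + 15) * narayanaTerm (m + 1) k
      + (m + 1) * narayanaTerm m k = gosperCert m (k + 1) - gosperCert m k := by
  have col : ((m + 3).choose (k + 1) : ℚ) = (m + 3 - k) * (m + 3).choose k / (k + 1) := by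
    rw [eq_div_iff (by positivity)]
    linear_combination (norm := (push_cast; ring)) cast_choose_succ_right_mul (m + 3) k
  unfold narayanaTerm gosperCert
  -- express every binomial coefficient through `(m + 3).choose k`
  rw [cast_choose_eq_div m k, cast_choose_eq_div (m + 1) (k + 1),
    cast_choose_eq_div (m + 2) (k + 1), col, cast_choose_eq_div (m + 1) k,
    cast_choose_eq_div (m + 2) k, pow_succ]
  push_cast
  field_simp
  ring

lemma gosperCert_zero (m : ℕ) : gosperCert m 0 = 0 := by
  norm_num [gosperCert]

lemma gosperCert_eq_zero_of_lt {m k : ℕ} (hk : m + 2 < k) : gosperCert m k = 0 := by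
  simp [gosperCert, Nat.choose_eq_zero_of_lt hk, Nat.choose_eq_zero_of_lt (by omega : m + 1 < k)]

lemma sum_range_narayanaTerm {m N : ℕ} (h : m + 1 ≤ N) :
    ∑ k ∈ range N, narayanaTerm m k = narayanaSum m := by
  refine (sum_subset (range_subset_range.2 h) fun k _ hk => ?_).symm
  simp [narayanaTerm, Nat.choose_eq_zero_of_lt (by simpa using hk : m < k)]

lemma narayanaSum_recurrence (m : ℕ) :
    (m + 4) * narayanaSum (m + 2) =
      (6 * m + 15) * narayanaSum (m + 1) - (m + 1) * narayanaSum m := by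
  have h := sum_range_sub (gosperCert m) (m + 4)
  rw [gosperCert_zero, gosperCert_eq_zero_of_lt (by omega), sub_zero,
    ← sum_congr rfl fun k _ => narayanaTerm_recurrence m k, sum_add_distrib, sum_sub_distrib,
    ← mul_sum, ← mul_sum, ← mul_sum, sum_range_narayanaTerm (by omega),
    sum_range_narayanaTerm (by omega), sum_range_narayanaTerm (by omega)] at h
  linarith

lemma narayanaTerm_eq (m k : ℕ) : narayanaTerm m k =
    1 / ((m + 1 : ℕ) : ℚ) * ((m + 1).choose k) * ((m + 1).choose (k + 1)) * 2 ^ k := by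
  have h := congrArg (Nat.cast (R := ℚ)) (Nat.add_one_mul_choose_eq m k)
  push_cast at h ⊢
  unfold narayanaTerm
  field_simp
  linear_combination ((m + 1).choose k : ℚ) * h

lemma narayanaSum_eq_finsum (m : ℕ) : narayanaSum m =
    ∑ᶠ k : ℕ, 1 / ((m + 1 : ℕ) : ℚ) * ((m + 1).choose k) * ((m + 1).choose (k + 1)) * 2 ^ k := by
  rw [finsum_eq_finsetSum_of_support_subset (s := range (m + 1))]
  · exact sum_congr rfl fun k _ => narayanaTerm_eq m k
  · intro k hk
    by_contra hk'
    simp_all [Nat.choose_eq_zero_of_lt (by simpa using hk' : m + 1 < k + 1)]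

lemma eq_of_recurrence {K : Type*} [Field K] {p q r a b : ℕ → K} (hp : ∀ m, p m ≠ 0)
    (ha : ∀ m, p m * a (m + 2) = q m * a (m + 1) + r m * a m)
    (hb : ∀ m, p m * b (m + 2) = q m * b (m + 1) + r m * b m) (h₀ : a 0 = b 0)
    (h₁ : a 1 = b 1) : a = b := by
  suffices h : ∀ m, a m = b m ∧ a (m + 1) = b (m + 1) from funext fun m => (h m).1
  intro m
  induction m with
  | zero => exact ⟨h₀, h₁⟩
  | succ m ih =>
    refine ⟨ih.2, mul_left_cancel₀ (hp m) ?_⟩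
    rw [ha, hb, ih.1, ih.2]

lemma card_littlePaths_succ_eq_narayanaSum (m : ℕ) :
    (Nat.card (SchroederPaths IsLittleSchroeder (m + 1)) : ℚ) = narayanaSum m := by
  have hL := coeff_recurrence_of_quadratic pathsGF_little_quadratic
  simp only [pathsGF, PowerSeries.coeff_mk] at hL
  have h := eq_of_recurrence (p := fun m : ℕ => (m + 4 : ℚ)) (q := fun m => 6 * m + 15)
    (r := fun m => -(m + 1))
    (a := fun m => (Nat.card (SchroederPaths IsLittleSchroeder (m + 1)) : ℚ)) (b := narayanaSum)
    (fun m => by positivity) (fun m => by linear_combination hL m)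
    (fun m => by linear_combination narayanaSum_recurrence m)
    (by norm_num [card_littlePaths_one, narayanaSum, narayanaTerm])
    (by norm_num [card_littlePaths_two, narayanaSum, narayanaTerm, sum_range_succ])
  exact congrFun h m

/-- The number of little Schröder paths of length `2n` is
`∑_{k ≥ 0} (1/n) C(n,k) C(n,k+1) 2^k`. -/
theorem little_schroeder_count (n : ℕ) (hn : 1 ≤ n) :
    (Nat.card {p : List SchStep // IsLittleSchroeder p ∧ pathLen p = 2 * n} : ℚ) =
      ∑ᶠ k : ℕ, (1 / (n : ℚ)) * (n.choose k) * (n.choose (k + 1)) * 2 ^ k := by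
  obtain ⟨m, rfl⟩ := Nat.exists_eq_add_of_le' hn
  exact (card_littlePaths_succ_eq_narayanaSum m).trans (narayanaSum_eq_finsum m)
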